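/- arXiv:1803.06415 — 4 statements merged into one kernel-verified Lean document; each statement's English description precedes it below -/
import Mathlib

section
/- For g = (x,y,z) ∈ Sol with z ≠ 0, the map σ : ℝ → Sol defined by σ(t) = ( x·(e^{tz}−1)/(e^{z}−1), y·(e^{−tz}−1)/(e^{−z}−1), t·z ) is a continuous group homomorphism from (ℝ,+) to Sol satisfying σ(1) = g. For g = (x,y,0), the map σ(t) = (t·x, t·y, 0) is a continuous group homomorphism from (ℝ,+) to Sol satisfying σ(1) = g. -/
noncomputable section

/-- The group `Sol`: underlying set `ℝ³` with multiplication
`(x₁,y₁,z₁)·(x₂,y₂,z₂) = (x₁ + e^{z₁}x₂, y₁ + e^{−z₁}y₂, z₁ + z₂)`. -/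
def Sol : Type := ℝ × ℝ × ℝ

namespace Sol

instance : TopologicalSpace Sol := inferInstanceAs (TopologicalSpace (ℝ × ℝ × ℝ))

/-- Build an element of `Sol` from coordinates. -/
def mk (x y z : ℝ) : Sol := ((x, y, z) : ℝ × ℝ × ℝ)

/-- First coordinate. -/
def X (g : Sol) : ℝ := (show ℝ × ℝ × ℝ from g).1
/-- Second coordinate. -/
def Y (g : Sol) : ℝ := (show ℝ × ℝ × ℝ from g).2.1
/-- Third coordinate. -/
def Z (g : Sol) : ℝ := (show ℝ × ℝ × ℝ from g).2.2

theorem ext {a b : Sol} (h1 : X a = X b) (h2 : Y a = Y b) (h3 : Z a = Z b) : a = b :=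
  show (show ℝ × ℝ × ℝ from a) = (show ℝ × ℝ × ℝ from b) from
    Prod.ext h1 (Prod.ext h2 h3)

instance : One Sol := ⟨mk 0 0 0⟩
instance : Mul Sol :=
  ⟨fun a b => mk (X a + Real.exp (Z a) * X b) (Y a + Real.exp (-Z a) * Y b) (Z a + Z b)⟩
instance : Inv Sol :=
  ⟨fun a => mk (-(Real.exp (-Z a) * X a)) (-(Real.exp (Z a) * Y a)) (-Z a)⟩

@[simp] theorem X_mk (x y z : ℝ) : X (mk x y z) = x := rfl
@[simp] theorem Y_mk (x y z : ℝ) : Y (mk x y z) = y := rfl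
@[simp] theorem Z_mk (x y z : ℝ) : Z (mk x y z) = z := rfl

@[simp] theorem X_one : X (1 : Sol) = 0 := rfl
@[simp] theorem Y_one : Y (1 : Sol) = 0 := rfl
@[simp] theorem Z_one : Z (1 : Sol) = 0 := rfl

@[simp] theorem X_mul (a b : Sol) : X (a * b) = X a + Real.exp (Z a) * X b := rfl
@[simp] theorem Y_mul (a b : Sol) : Y (a * b) = Y a + Real.exp (-Z a) * Y b := rfl
@[simp] theorem Z_mul (a b : Sol) : Z (a * b) = Z a + Z b := rfl

@[simp] theorem X_inv (a : Sol) : X a⁻¹ = -(Real.exp (-Z a) * X a) := rfl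
@[simp] theorem Y_inv (a : Sol) : Y a⁻¹ = -(Real.exp (Z a) * Y a) := rfl
@[simp] theorem Z_inv (a : Sol) : Z a⁻¹ = -Z a := rfl

instance : Group Sol :=
  Group.ofLeftAxioms
    (fun a b c => ext
      (by simp [Real.exp_add]; ring)
      (by simp [Real.exp_add, neg_add]; ring)
      (by simp; ring))
    (fun a => ext (by simp) (by simp) (by simp))
    (fun a => ext (by simp) (by simp) (by simp))

/-- A (continuous) one-parameter subgroup of `Sol`: a continuous group homomorphism
from `(ℝ,+)` to `Sol`. -/
def IsOneParam (σ : ℝ → Sol) : Prop :=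
  Continuous σ ∧ ∀ s t : ℝ, σ (s + t) = σ s * σ t

/-- A pair of points `m₁ m₂` of the homogeneous space `Sol ⧸ Γ` is blockable if some finite
set `B` avoiding `m₁, m₂` meets every connecting curve `t ↦ σ(t)•m₁`, `t ∈ [0,1]`, where
`σ` is a one-parameter subgroup with `σ(1)•m₁ = m₂`. -/
def Blockable (Γ : Subgroup Sol) (m₁ m₂ : Sol ⧸ Γ) : Prop :=
  ∃ B : Finset (Sol ⧸ Γ), m₁ ∉ B ∧ m₂ ∉ B ∧
    ∀ σ : ℝ → Sol, IsOneParam σ → σ 1 • m₁ = m₂ →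
      ∃ t ∈ Set.Icc (0 : ℝ) 1, σ t • m₁ ∈ B

end Sol

/-! A curve `t ↦ (a t, b t, c t)` is a homomorphism into `Sol` when `c` is additive and `a`, `b`
are cocycles: `a (s + t) = a s + e^{c s} a t` and `b (s + t) = b s + e^{-c s} b t`.
For `c t = t z` every multiple of `e^{t z} - 1` is such a cocycle, because
`e^{u + v} - 1 = (e^u - 1) + e^u (e^v - 1)`; the multiple `x / (e^z - 1)` is then forced by
`σ 1 = g`, which needs `z ≠ 0`. For `z = 0` the cocycle identities reduce to additivity, so
linear coordinates work. -/

namespace Sol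

theorem continuous_mk_comp {a b c : ℝ → ℝ} (ha : Continuous a) (hb : Continuous b)
    (hc : Continuous c) : Continuous fun t => mk (a t) (b t) (c t) :=
  ha.prodMk (hb.prodMk hc)

theorem isOneParam_mk {a b c : ℝ → ℝ} (ha : Continuous a) (hb : Continuous b)
    (hc : Continuous c) (hc_add : ∀ s t, c (s + t) = c s + c t)
    (ha_add : ∀ s t, a (s + t) = a s + Real.exp (c s) * a t)
    (hb_add : ∀ s t, b (s + t) = b s + Real.exp (-c s) * b t) :
    IsOneParam fun t => mk (a t) (b t) (c t) :=
  ⟨continuous_mk_comp ha hb hc, fun s t => ext (ha_add s t) (hb_add s t) (hc_add s t)⟩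

end Sol

namespace Real

theorem exp_add_sub_one (u v : ℝ) : exp (u + v) - 1 = (exp u - 1) + exp u * (exp v - 1) := by
  rw [exp_add]; ring

theorem exp_sub_one_ne_zero {u : ℝ} (hu : u ≠ 0) : exp u - 1 ≠ 0 :=
  sub_ne_zero.2 (mt (exp_eq_one_iff u).1 hu)

end Real

open Real in
/-- explicit one-parameter subgroups through each point of `Sol`. -/
theorem stmt0 (x y z : ℝ) :
    (z ≠ 0 →
      Sol.IsOneParam (fun t : ℝ =>
        Sol.mk (x * (Real.exp (t * z) - 1) / (Real.exp z - 1))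
          (y * (Real.exp (-(t * z)) - 1) / (Real.exp (-z) - 1)) (t * z)) ∧
      Sol.mk (x * (Real.exp (1 * z) - 1) / (Real.exp z - 1))
          (y * (Real.exp (-(1 * z)) - 1) / (Real.exp (-z) - 1)) (1 * z) = Sol.mk x y z) ∧
    (Sol.IsOneParam (fun t : ℝ => Sol.mk (t * x) (t * y) 0) ∧
      Sol.mk (1 * x) (1 * y) 0 = Sol.mk x y 0) := by
  refine ⟨fun hz => ⟨?_, ?_⟩, ?_, by simp only [one_mul]⟩
  · refine Sol.isOneParam_mk (by fun_prop) (by fun_prop) (by fun_prop) (fun s t => add_mul s t z)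
      (fun s t => ?_) (fun s t => ?_)
    · rw [add_mul, exp_add_sub_one]; ring
    · rw [add_mul, neg_add, exp_add_sub_one]; ring
  · rw [one_mul, mul_div_cancel_right₀ x (exp_sub_one_ne_zero hz),
      mul_div_cancel_right₀ y (exp_sub_one_ne_zero (neg_ne_zero.2 hz))]
  · refine Sol.isOneParam_mk (by fun_prop) (by fun_prop) continuous_const
      (fun _ _ => (add_zero 0).symm) (fun s t => ?_) (fun s t => ?_)
    all_goals simp only [add_mul, neg_zero, exp_zero, one_mul]
end
end

section
/- Let A ∈ SL₂(ℤ) and suppose there are P ∈ GL₂(ℝ) and s ∈ ℝ, s ≠ 0, with P·A·P⁻¹ = diag(e^{s}, e^{−s}). Then the map (p,q,r) ↦ (P·(p,q), s·r) is an injective group homomorphism from the semidirect product ℤ² ⋊_A ℤ into Sol, where in ℤ² ⋊_A ℤ the element r ∈ ℤ acts on ℤ² as A^{r}, i.e. (p₁,q₁,r₁)(p₂,q₂,r₂) = ((p₁,q₁) + A^{r₁}(p₂,q₂), r₁ + r₂). -/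
noncomputable section

/-- The embedding `(p,q,r) ↦ (P·(p,q), s·r)` of `ℤ² ⋊ ℤ` into `Sol`. -/
noncomputable def solEmbed (P : Matrix (Fin 2) (Fin 2) ℝ) (s : ℝ) (p q r : ℤ) : Sol :=
  Sol.mk (P.mulVec ![(p : ℝ), (q : ℝ)] 0) (P.mulVec ![(p : ℝ), (q : ℝ)] 1) (s * r)

/-!
`Sol` is the semidirect product `ℝ² ⋊ ℝ` in which `t ∈ ℝ` acts on `ℝ²` by
`diag(e^t, e^{-t})`. Since `P` conjugates `A` to `diag(e^s, e^{-s})`, it conjugates `A^r` to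
`diag(e^{sr}, e^{-sr})` for every `r ∈ ℤ`, so `(v, r) ↦ (P v, s r)` intertwines the two
semidirect product laws. It is injective because `P` is invertible and `s ≠ 0`.
-/

open Matrix

namespace Sol

def expDiag : Multiplicative ℝ →* Matrix (Fin 2) (Fin 2) ℝ where
  toFun t := diagonal ![Real.exp t.toAdd, Real.exp (-t.toAdd)]
  map_one' := by
    rw [← diagonal_one]; congr 1; ext i; fin_cases i <;> simp
  map_mul' t u := by
    rw [diagonal_mul_diagonal]; congr 1; ext i; fin_cases i <;> simp [Real.exp_add, mul_comm]

def ofVec (v : Fin 2 → ℝ) (z : ℝ) : Sol := mk (v 0) (v 1) z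

theorem ofVec_mul_ofVec (v w : Fin 2 → ℝ) (z z' : ℝ) :
    ofVec v z * ofVec w z' = ofVec (v + expDiag (.ofAdd z) *ᵥ w) (z + z') := by
  apply ext <;> simp [ofVec, expDiag]

theorem ofVec_inj {v w : Fin 2 → ℝ} {z z' : ℝ} :
    ofVec v z = ofVec w z' ↔ v = w ∧ z = z' := by
  refine ⟨fun h => ⟨funext fun i => ?_, congrArg Z h⟩, fun ⟨hv, hz⟩ => hv ▸ hz ▸ rfl⟩
  fin_cases i
  exacts [congrArg X h, congrArg Y h]

end Sol

theorem SemiconjBy.map_zpow_right {G H M : Type*} [Group G] [Group H] [Monoid M]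
    (f : G →* M) (g : H →* M) {a : M} {x : G} {y : H} (h : SemiconjBy a (f x) (g y)) (r : ℤ) :
    SemiconjBy a (f (x ^ r)) (g (y ^ r)) := by
  have := SemiconjBy.units_zpow_right (x := f.toHomUnits x) (y := g.toHomUnits y) h r
  simpa only [← map_zpow, MonoidHom.coe_toHomUnits] using this

theorem mul_map_zpow_eq_expDiag_mul (A : SpecialLinearGroup (Fin 2) ℤ)
    {P : Matrix (Fin 2) (Fin 2) ℝ} {s : ℝ}
    (h : P * (A : Matrix (Fin 2) (Fin 2) ℤ).map Int.cast = Sol.expDiag (.ofAdd s) * P)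
    (r : ℤ) :
    P * ((A ^ r : SpecialLinearGroup (Fin 2) ℤ) : Matrix (Fin 2) (Fin 2) ℤ).map Int.cast =
      Sol.expDiag (.ofAdd (s * r)) * P := by
  have := SemiconjBy.map_zpow_right
    (SpecialLinearGroup.coeMonoidHom.comp (SpecialLinearGroup.map (Int.castRingHom ℝ)))
    Sol.expDiag (x := A) (y := .ofAdd s) h r
  rwa [← ofAdd_zsmul, zsmul_eq_mul, mul_comm] at this

theorem solEmbed_eq_ofVec (P : Matrix (Fin 2) (Fin 2) ℝ) (s : ℝ) (p q r : ℤ) :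
    solEmbed P s p q r = Sol.ofVec (P *ᵥ (Int.cast ∘ ![p, q])) (s * r) := by
  have : (![(p : ℝ), q] : Fin 2 → ℝ) = Int.cast ∘ ![p, q] := by
    ext i; fin_cases i <;> rfl
  rw [solEmbed, Sol.ofVec, this]

theorem solEmbed_injective {P : Matrix (Fin 2) (Fin 2) ℝ} (hP : IsUnit P.det) {s : ℝ}
    (hs : s ≠ 0) : Function.Injective (fun v : ℤ × ℤ × ℤ => solEmbed P s v.1 v.2.1 v.2.2) := by
  rintro ⟨p, q, r⟩ ⟨p', q', r'⟩ h
  simp only [solEmbed_eq_ofVec] at h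
  obtain ⟨hv, hz⟩ := Sol.ofVec_inj.1 h
  have hpq : ![p, q] = ![p', q'] := Int.cast_injective.comp_left
    (mulVec_injective_iff_isUnit.2 ((isUnit_iff_isUnit_det P).2 hP) hv)
  have hr : r = r' := by exact_mod_cast mul_left_cancel₀ hs hz
  obtain ⟨rfl, rfl⟩ : p = p' ∧ q = q' := ⟨congrFun hpq 0, congrFun hpq 1⟩
  rw [hr]

theorem solEmbed_mul (A : SpecialLinearGroup (Fin 2) ℤ) {P : Matrix (Fin 2) (Fin 2) ℝ} {s : ℝ}
    (h : P * (A : Matrix (Fin 2) (Fin 2) ℤ).map Int.cast = Sol.expDiag (.ofAdd s) * P)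
    (p₁ q₁ r₁ p₂ q₂ r₂ : ℤ) :
    solEmbed P s (p₁ + ((A ^ r₁ : SpecialLinearGroup (Fin 2) ℤ) :
          Matrix (Fin 2) (Fin 2) ℤ).mulVec ![p₂, q₂] 0)
        (q₁ + ((A ^ r₁ : SpecialLinearGroup (Fin 2) ℤ) :
          Matrix (Fin 2) (Fin 2) ℤ).mulVec ![p₂, q₂] 1)
        (r₁ + r₂) =
      solEmbed P s p₁ q₁ r₁ * solEmbed P s p₂ q₂ r₂ := by
  set M : Matrix (Fin 2) (Fin 2) ℤ :=
    ((A ^ r₁ : SpecialLinearGroup (Fin 2) ℤ) : Matrix (Fin 2) (Fin 2) ℤ)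
  have hvec : ![p₁ + (M *ᵥ ![p₂, q₂]) 0, q₁ + (M *ᵥ ![p₂, q₂]) 1] =
      ![p₁, q₁] + M *ᵥ ![p₂, q₂] := by
    ext i; fin_cases i <;> rfl
  have hcast : (Int.cast ∘ (![p₁, q₁] + M *ᵥ ![p₂, q₂]) : Fin 2 → ℝ) =
      Int.cast ∘ ![p₁, q₁] + M.map Int.cast *ᵥ (Int.cast ∘ ![p₂, q₂]) :=
    funext fun i => (Int.cast_add _ _).trans (congrArg _ ((Int.castRingHom ℝ).map_mulVec M _ i))
  rw [solEmbed_eq_ofVec, solEmbed_eq_ofVec, solEmbed_eq_ofVec, Sol.ofVec_mul_ofVec, hvec]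
  congr 1
  · rw [hcast, mulVec_add, mulVec_mulVec, mul_map_zpow_eq_expDiag_mul A h, ← mulVec_mulVec]
  · push_cast
    ring

/-- the map `(p,q,r) ↦ (P·(p,q), s·r)` is an injective group homomorphism from
`ℤ² ⋊_A ℤ` (with multiplication `(p₁,q₁,r₁)(p₂,q₂,r₂) = ((p₁,q₁) + A^{r₁}(p₂,q₂), r₁+r₂)`)
into `Sol`. -/
theorem stmt3 (A : Matrix.SpecialLinearGroup (Fin 2) ℤ)
    (P : Matrix (Fin 2) (Fin 2) ℝ) (hP : IsUnit P.det) (s : ℝ) (hs : s ≠ 0)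
    (hconj : P * ((A : Matrix (Fin 2) (Fin 2) ℤ).map (Int.cast : ℤ → ℝ)) * P⁻¹ =
      Matrix.diagonal ![Real.exp s, Real.exp (-s)]) :
    Function.Injective (fun v : ℤ × ℤ × ℤ => solEmbed P s v.1 v.2.1 v.2.2) ∧
    ∀ p₁ q₁ r₁ p₂ q₂ r₂ : ℤ,
      solEmbed P s (p₁ + ((A ^ r₁ : Matrix.SpecialLinearGroup (Fin 2) ℤ) :
          Matrix (Fin 2) (Fin 2) ℤ).mulVec ![p₂, q₂] 0)
        (q₁ + ((A ^ r₁ : Matrix.SpecialLinearGroup (Fin 2) ℤ) :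
          Matrix (Fin 2) (Fin 2) ℤ).mulVec ![p₂, q₂] 1)
        (r₁ + r₂) =
      solEmbed P s p₁ q₁ r₁ * solEmbed P s p₂ q₂ r₂ := by
  have hPA : P * (A : Matrix (Fin 2) (Fin 2) ℤ).map Int.cast = Sol.expDiag (.ofAdd s) * P := by
    show _ = diagonal ![Real.exp s, Real.exp (-s)] * P
    rw [← hconj, nonsing_inv_mul_cancel_right _ _ hP]
  exact ⟨solEmbed_injective hP hs, solEmbed_mul A hPA⟩
end
end

section
/- Let A = (a,b;c,d) ∈ SL₂(ℤ) with tr(A) > 2 (so b ≠ 0, c ≠ 0), let s > 0 satisfy e^{s} + e^{−s} = tr(A), and let Γ(A) = {( p − ((e^{s}−a)/b)·q , q − ((e^{−s}−d)/c)·p , s·r ) : p,q,r ∈ ℤ} be the corresponding subgroup of Sol. Then the set {(0, y, z)·γ : y ∈ ℝ, y ≠ 0, z ∈ ℝ, γ ∈ Γ(A)} is dense in Sol (i.e., dense in ℝ³ with the Euclidean topology). -/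
noncomputable section

/-- The subset `Γ(A) = {(p − ((e^s−a)/b)q, q − ((e^{−s}−d)/c)p, s·r) : p,q,r ∈ ℤ}` of `Sol`. -/
def latticeSet (a b c d s : ℝ) : Set Sol :=
  {g : Sol | ∃ p q r : ℤ,
    g = Sol.mk ((p : ℝ) - (Real.exp s - a) / b * (q : ℝ))
      ((q : ℝ) - (Real.exp (-s) - d) / c * (p : ℝ)) (s * (r : ℤ))}

/-! Right-multiplying `(0, y, z)` by a point `γ` of `Γ(A)` with `r = 0` gives
`(e^z X(γ), y + e^{-z} Y(γ), z)`. The first coordinates `X(γ) = p - λ q`, `λ = (e^s - a) / b`,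
form the group `ℤ + λ ℤ`, which is dense because `e^s`, a root of `t² - tr(A) t + 1` with
`tr(A) > 2`, is irrational. Since `y ≠ 0` excludes only one value of the second coordinate, the set
contains each plane `{(e^z w, y, z)}`, `w ∈ ℤ + λ ℤ`, up to a curve, and these planes fill a dense
set: the image of a dense set under the homeomorphism `(w, y, z) ↦ (e^z w, y, z)`. -/

open Polynomial in
theorem irrational_of_add_inv_eq_intCast {x : ℝ} {T : ℤ} (hT : 2 < |T|)
    (hx : x + x⁻¹ = T) : Irrational x := by
  rintro ⟨q, rfl⟩
  have hq : q + q⁻¹ = T := by exact_mod_cast hx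
  have hq0 : q ≠ 0 := by
    rintro rfl
    obtain rfl : T = 0 := by exact_mod_cast (by simpa using hq.symm)
    norm_num at hT
  have hroot : aeval q (X ^ 2 - C T * X + 1 : ℤ[X]) = 0 := by
    field_simp at hq
    simpa using (by linear_combination hq : q ^ 2 - T * q + 1 = 0)
  have hmonic : (X ^ 2 - C T * X + 1 : ℤ[X]).Monic := by monicity!
  obtain ⟨n, rfl, hn⟩ := exists_integer_of_is_root_of_monic hmonic hroot
  have hT2 : (T : ℚ) = 2 ∨ (T : ℚ) = -2 := by
    rcases Int.isUnit_iff.mp (isUnit_of_dvd_one (by simpa using hn)) with rfl | rfl <;>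
      norm_num at hq <;> simp [← hq]
  exact hT.ne' ((abs_eq two_pos.le).mpr (by exact_mod_cast hT2))

theorem Matrix.SpecialLinearGroup.apply_zero_one_ne_zero_of_abs_trace_ne_two
    (A : Matrix.SpecialLinearGroup (Fin 2) ℤ)
    (hA : |(A : Matrix (Fin 2) (Fin 2) ℤ).trace| ≠ 2) : A 0 1 ≠ 0 := by
  intro hb
  have hdet := A.det_coe
  rw [Matrix.det_fin_two, hb, zero_mul, sub_zero] at hdet
  rw [Matrix.trace_fin_two] at hA
  rcases Int.eq_one_or_neg_one_of_mul_eq_one' hdet with ⟨ha, hd⟩ | ⟨ha, hd⟩ <;>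
    simp [ha, hd] at hA

namespace Sol

theorem dense_of_forall_mk_mem {D : Set ℝ} (hD : Dense D) {S : Set Sol}
    (hS : ∀ w ∈ D, ∀ z : ℝ, ∃ c : ℝ, ∀ y ≠ c, mk (Real.exp z * w) y z ∈ S) : Dense S := by
  let Φ : ℝ × ℝ × ℝ → Sol := fun p => mk (Real.exp p.2.2 * p.1) p.2.1 p.2.2
  have hΦ : Continuous Φ := by
    show Continuous fun p : ℝ × ℝ × ℝ => (Real.exp p.2.2 * p.1, p.2.1, p.2.2)
    fun_prop
  have hΦsurj : Function.Surjective Φ := fun g =>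
    ⟨(Real.exp (-Z g) * X g, Y g, Z g), ext (by simp [Φ, ← mul_assoc, ← Real.exp_add]) rfl rfl⟩
  have hdense : Dense (Φ '' D ×ˢ Set.univ) :=
    hΦsurj.denseRange.dense_image hΦ (hD.prod dense_univ)
  refine dense_closure.mp (hdense.mono ?_)
  rintro _ ⟨⟨w, y, z⟩, ⟨hw, -⟩, rfl⟩
  obtain ⟨c, hc⟩ := hS w hw z
  have hmk : Continuous (mk (Real.exp z * w) · z) := by
    show Continuous fun y : ℝ => (Real.exp z * w, y, z)
    fun_prop
  exact map_mem_closure (f := (mk (Real.exp z * w) · z)) hmk (dense_compl_singleton c y) hc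

end Sol

theorem stmt14_general (A : Matrix.SpecialLinearGroup (Fin 2) ℤ)
    (htr : 2 < Matrix.trace (A : Matrix (Fin 2) (Fin 2) ℤ)) (s : ℝ)
    (hsum : Real.exp s + Real.exp (-s) =
      ((Matrix.trace (A : Matrix (Fin 2) (Fin 2) ℤ) : ℤ) : ℝ)) :
    Dense {g : Sol | ∃ (y z : ℝ) (γ : Sol), y ≠ 0 ∧
      γ ∈ latticeSet (((A : Matrix (Fin 2) (Fin 2) ℤ) 0 0 : ℤ) : ℝ)
        (((A : Matrix (Fin 2) (Fin 2) ℤ) 0 1 : ℤ) : ℝ)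
        (((A : Matrix (Fin 2) (Fin 2) ℤ) 1 0 : ℤ) : ℝ)
        (((A : Matrix (Fin 2) (Fin 2) ℤ) 1 1 : ℤ) : ℝ) s ∧
      g = Sol.mk 0 y z * γ} := by
  have habs : 2 < |(A : Matrix (Fin 2) (Fin 2) ℤ).trace| := lt_abs.mpr (.inl htr)
  set lam := (Real.exp s - (A 0 0 : ℝ)) / (A 0 1 : ℝ)
  set mu := (Real.exp (-s) - (A 1 1 : ℝ)) / (A 1 0 : ℝ)
  have hlam : Irrational lam :=
    ((irrational_of_add_inv_eq_intCast habs (by rwa [← Real.exp_neg])).sub_intCast _).div_intCast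
      (A.apply_zero_one_ne_zero_of_abs_trace_ne_two habs.ne')
  refine Sol.dense_of_forall_mk_mem (dense_addSubgroupClosure_pair_iff.mpr
    (by rwa [div_one] : Irrational (lam / 1))) ?_
  rintro w hw z
  obtain ⟨m, n, rfl⟩ := AddSubgroup.mem_closure_pair.mp hw
  -- the point of `Γ(A)` with `(p, q, r) = (n, -m, 0)`, whose first coordinate is `m • lam + n • 1`
  let γ := Sol.mk (n - lam * (-m : ℤ)) ((-m : ℤ) - mu * n) 0
  refine ⟨Real.exp (-z) * γ.Y, fun y hy => ⟨y - Real.exp (-z) * γ.Y, z, γ, sub_ne_zero.mpr hy,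
    ⟨n, -m, 0, by simp [γ, lam, mu]⟩, Sol.ext (by simp [γ, add_comm, mul_comm]) (by simp [γ]) (by simp [γ])⟩⟩

/-- the set `{(0,y,z)·γ : y ≠ 0, z ∈ ℝ, γ ∈ Γ(A)}` is dense in `Sol`. -/
theorem stmt14 (A : Matrix.SpecialLinearGroup (Fin 2) ℤ)
    (htr : 2 < Matrix.trace (A : Matrix (Fin 2) (Fin 2) ℤ)) (s : ℝ) (hs : 0 < s)
    (hsum : Real.exp s + Real.exp (-s) =
      ((Matrix.trace (A : Matrix (Fin 2) (Fin 2) ℤ) : ℤ) : ℝ)) :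
    Dense {g : Sol | ∃ (y z : ℝ) (γ : Sol), y ≠ 0 ∧
      γ ∈ latticeSet (((A : Matrix (Fin 2) (Fin 2) ℤ) 0 0 : ℤ) : ℝ)
        (((A : Matrix (Fin 2) (Fin 2) ℤ) 0 1 : ℤ) : ℝ)
        (((A : Matrix (Fin 2) (Fin 2) ℤ) 1 0 : ℤ) : ℝ)
        (((A : Matrix (Fin 2) (Fin 2) ℤ) 1 1 : ℤ) : ℝ) s ∧
      g = Sol.mk 0 y z * γ} :=
  stmt14_general A htr s hsum
end
end

section
/- Let τ₁ = (x₁,y₁,0) and τ₂ = (x₂,y₂,0) be elements of Sol with third coordinate zero, let τ₃ = (x₃,y₃,z₃) ∈ Sol with z₃ ≠ 0, and set g = ( x₃/(e^{z₃}−1), y₃/(e^{−z₃}−1), 0 ) ∈ Sol. Then the inner automorphism φ_g : h ↦ g⁻¹·h·g of Sol fixes τ₁ and τ₂ and sends (0,0,z₃) to τ₃; consequently φ_g maps the subgroup of Sol generated by {τ₁, τ₂, (0,0,z₃)} onto the subgroup generated by {τ₁, τ₂, τ₃}. -/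
/-! Conjugation `h ↦ g⁻¹hg` by `g = (a, b, 0)` sends `(x, y, z)` to
`(x + (e^z - 1) a, y + (e^{-z} - 1) b, z)`. It therefore fixes the plane `z = 0` pointwise, and
for `z ≠ 0` the translation parameters `(a, b)` can be chosen to reach any point at height `z`
from `(0, 0, z)`. Being an automorphism, it maps the subgroup generated by a set onto the
subgroup generated by the image of that set. -/

noncomputable section

theorem Subgroup.image_conj_closure {G : Type*} [Group G] (g : G) (s : Set G) :
    (fun h => g⁻¹ * h * g) '' (Subgroup.closure s : Set G) =
      Subgroup.closure ((fun h => g⁻¹ * h * g) '' s) := by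
  have hconj : (fun h => g⁻¹ * h * g) = ⇑(MulAut.conj g⁻¹).toMonoidHom := by
    funext h
    simp
  rw [hconj, ← Subgroup.coe_map, MonoidHom.map_closure]

namespace Sol

open Real

theorem inv_mk_zero (a b : ℝ) : (mk a b 0)⁻¹ = mk (-a) (-b) 0 :=
  ext (by simp) (by simp) (by simp)

theorem conj_mk_zero (a b x y z : ℝ) :
    (mk a b 0)⁻¹ * mk x y z * mk a b 0 =
      mk (x + (exp z - 1) * a) (y + (exp (-z) - 1) * b) z := by
  rw [inv_mk_zero]
  exact ext (by simp only [X_mul, X_mk, Z_mk, exp_zero, one_mul, Z_mul, zero_add]; ring)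
    (by simp only [Y_mul, Y_mk, Z_mk, neg_zero, exp_zero, one_mul, Z_mul, zero_add]; ring)
    (by simp)

theorem conj_mk_zero_mk_zero (a b x y : ℝ) : (mk a b 0)⁻¹ * mk x y 0 * mk a b 0 = mk x y 0 := by
  simp [conj_mk_zero]

theorem conj_mk_zero_mk_zero_zero {x y z : ℝ} (hz : z ≠ 0) :
    (mk (x / (exp z - 1)) (y / (exp (-z) - 1)) 0)⁻¹ * mk 0 0 z *
        mk (x / (exp z - 1)) (y / (exp (-z) - 1)) 0 = mk x y z := by
  have hexp : exp z - 1 ≠ 0 := sub_ne_zero.mpr (mt (exp_eq_one_iff z).mp hz)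
  have hexp_neg : exp (-z) - 1 ≠ 0 :=
    sub_ne_zero.mpr (mt (exp_eq_one_iff (-z)).mp (neg_ne_zero.mpr hz))
  rw [conj_mk_zero, mul_div_cancel₀ _ hexp, mul_div_cancel₀ _ hexp_neg, zero_add, zero_add]

end Sol

/-- the inner automorphism `h ↦ g⁻¹hg` with
`g = (x₃/(e^{z₃}−1), y₃/(e^{−z₃}−1), 0)` fixes `τ₁, τ₂`, sends `(0,0,z₃)` to `τ₃`, and maps
the subgroup generated by `{τ₁, τ₂, (0,0,z₃)}` onto the subgroup generated by
`{τ₁, τ₂, τ₃}`. -/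
theorem stmt15 (x₁ y₁ x₂ y₂ x₃ y₃ z₃ : ℝ) (hz₃ : z₃ ≠ 0) :
    (fun h : Sol => (Sol.mk (x₃ / (Real.exp z₃ - 1)) (y₃ / (Real.exp (-z₃) - 1)) 0)⁻¹ * h *
        Sol.mk (x₃ / (Real.exp z₃ - 1)) (y₃ / (Real.exp (-z₃) - 1)) 0) (Sol.mk x₁ y₁ 0) =
      Sol.mk x₁ y₁ 0 ∧
    (fun h : Sol => (Sol.mk (x₃ / (Real.exp z₃ - 1)) (y₃ / (Real.exp (-z₃) - 1)) 0)⁻¹ * h *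
        Sol.mk (x₃ / (Real.exp z₃ - 1)) (y₃ / (Real.exp (-z₃) - 1)) 0) (Sol.mk x₂ y₂ 0) =
      Sol.mk x₂ y₂ 0 ∧
    (fun h : Sol => (Sol.mk (x₃ / (Real.exp z₃ - 1)) (y₃ / (Real.exp (-z₃) - 1)) 0)⁻¹ * h *
        Sol.mk (x₃ / (Real.exp z₃ - 1)) (y₃ / (Real.exp (-z₃) - 1)) 0) (Sol.mk 0 0 z₃) =
      Sol.mk x₃ y₃ z₃ ∧
    (fun h : Sol => (Sol.mk (x₃ / (Real.exp z₃ - 1)) (y₃ / (Real.exp (-z₃) - 1)) 0)⁻¹ * h *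
        Sol.mk (x₃ / (Real.exp z₃ - 1)) (y₃ / (Real.exp (-z₃) - 1)) 0) ''
        (Subgroup.closure {Sol.mk x₁ y₁ 0, Sol.mk x₂ y₂ 0, Sol.mk 0 0 z₃} : Set Sol) =
      (Subgroup.closure {Sol.mk x₁ y₁ 0, Sol.mk x₂ y₂ 0, Sol.mk x₃ y₃ z₃} : Set Sol) := by
  have fix₁ := Sol.conj_mk_zero_mk_zero (x₃ / (Real.exp z₃ - 1)) (y₃ / (Real.exp (-z₃) - 1)) x₁ y₁
  have fix₂ := Sol.conj_mk_zero_mk_zero (x₃ / (Real.exp z₃ - 1)) (y₃ / (Real.exp (-z₃) - 1)) x₂ y₂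
  have move₃ := Sol.conj_mk_zero_mk_zero_zero (x := x₃) (y := y₃) hz₃
  refine ⟨fix₁, fix₂, move₃, ?_⟩
  rw [Subgroup.image_conj_closure, Set.image_insert_eq, Set.image_insert_eq, Set.image_singleton,
    fix₁, fix₂, move₃]
end
end
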